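/- Let t > 0 and let f : [0,t] → ℝ be continuous. Then the function F(ε) = (1/Γ(1 − ε)) ∫_0^t (t − τ)^{−ε} f(τ) dτ, defined for ε in a neighborhood of 0, is differentiable at ε = 0 with F(0) = ∫_0^t f(τ) dτ and F′(0) = −∫_0^t (ln(t − τ) + γ) f(τ) dτ, where γ is the Euler–Mascheroni constant. -/

import Mathlib

/-! Since `Γ'(1) = -γ`, the factor `1 / Γ(1 - ε)` has derivative `-γ` at `0`. The integral can be
differentiated under the integral sign: as `|log y| ≤ y^(±δ) / δ`, for `|ε| < 1/4` the
`ε`-derivative `-(t - τ)^(-ε) log (t - τ) f(τ)` of the integrand is dominated by a multiple of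
`(t - τ)^(1/2) + (t - τ)^(-1/2)`, which is integrable on `[0, t]`. The product rule then gives
`F'(0)`. -/

open MeasureTheory Real Set

open scoped Interval

lemma hasDerivAt_one_div_Gamma_one_sub :
    HasDerivAt (fun ε : ℝ => 1 / Gamma (1 - ε)) (-eulerMascheroniConstant) 0 := by
  have hΓ : HasDerivAt (fun ε : ℝ => Gamma (1 - ε)) eulerMascheroniConstant 0 := by
    simpa [Function.comp_def] using
      hasDerivAt_Gamma_one.comp_of_eq (0 : ℝ) ((hasDerivAt_id (0 : ℝ)).const_sub 1) (by simp)
  simpa [Gamma_one] using hΓ.fun_inv (by simp [Gamma_one])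

lemma abs_log_le_rpow_neg_div {y δ : ℝ} (hy : 0 < y) (hy1 : y ≤ 1) (hδ : 0 < δ) :
    |log y| ≤ y ^ (-δ) / δ := by
  rw [abs_of_nonpos (log_nonpos hy.le hy1), ← log_inv, rpow_neg hy.le, ← inv_rpow hy.le]
  exact log_le_rpow_div (inv_nonneg.mpr hy.le) hδ

lemma rpow_neg_mul_abs_log_le {x y δ : ℝ} (hy : 0 < y) (hδ : 0 < δ) (hx : |x| ≤ δ) :
    y ^ (-x) * |log y| ≤ (y ^ (2 * δ) + y ^ (-(2 * δ))) / δ := by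
  obtain ⟨hxl, hxu⟩ := abs_le.mp hx
  rcases le_total y 1 with hy1 | hy1
  · have hpow : y ^ (-x) ≤ y ^ (-δ) := rpow_le_rpow_of_exponent_ge hy hy1 (by linarith)
    calc y ^ (-x) * |log y| ≤ y ^ (-δ) * (y ^ (-δ) / δ) :=
          mul_le_mul hpow (abs_log_le_rpow_neg_div hy hy1 hδ) (abs_nonneg _) (by positivity)
      _ = y ^ (-(2 * δ)) / δ := by rw [mul_div_assoc', ← rpow_add hy]; ring_nf
      _ ≤ _ := by gcongr; exact le_add_of_nonneg_left (by positivity)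
  · have hpow : y ^ (-x) ≤ y ^ δ := rpow_le_rpow_of_exponent_le hy1 (by linarith)
    have hlog : |log y| ≤ y ^ δ / δ := by
      rw [abs_of_nonneg (log_nonneg hy1)]
      exact log_le_rpow_div hy.le hδ
    calc y ^ (-x) * |log y| ≤ y ^ δ * (y ^ δ / δ) :=
          mul_le_mul hpow hlog (abs_nonneg _) (by positivity)
      _ = y ^ (2 * δ) / δ := by rw [mul_div_assoc', ← rpow_add hy]; ring_nf
      _ ≤ _ := by gcongr; exact le_add_of_nonneg_right (by positivity)

lemma intervalIntegrable_sub_rpow {a b r : ℝ} (hr : -1 < r) :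
    IntervalIntegrable (fun τ => (b - τ) ^ r) volume a b := by
  simpa using
    (intervalIntegral.intervalIntegrable_rpow' (a := b - a) (b := b - b) hr).comp_sub_left b

lemma IntervalIntegrable.of_abs_le_const {a b M : ℝ} {g : ℝ → ℝ}
    (hg : AEStronglyMeasurable g (volume.restrict (Ι a b)))
    (hgM : ∀ᵐ τ ∂volume, τ ∈ Ι a b → |g τ| ≤ M) :
    IntervalIntegrable g volume a b := by
  refine (intervalIntegrable_const (c := M)).mono_fun hg ?_
  filter_upwards [(ae_restrict_iff' measurableSet_uIoc).mpr hgM] with τ hτ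
  simpa only [norm_eq_abs] using hτ.trans (le_abs_self M)

theorem hasDerivAt_intervalIntegral_sub_rpow_neg_mul {a b M : ℝ} {g : ℝ → ℝ} (hab : a ≤ b)
    (hg : AEStronglyMeasurable g (volume.restrict (Ι a b)))
    (hgM : ∀ᵐ τ ∂volume, τ ∈ Ι a b → |g τ| ≤ M) :
    IntervalIntegrable (fun τ => log (b - τ) * g τ) volume a b ∧
      HasDerivAt (fun ε : ℝ => ∫ τ in a..b, (b - τ) ^ (-ε) * g τ)
        (-∫ τ in a..b, log (b - τ) * g τ) 0 := by
  set F' : ℝ → ℝ → ℝ := fun x τ => -((b - τ) ^ (-x) * log (b - τ) * g τ)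
  set bound : ℝ → ℝ := fun τ =>
    M * (((b - τ) ^ (2 * (1 / 4) : ℝ) + (b - τ) ^ (-(2 * (1 / 4)) : ℝ)) / (1 / 4))
  have hrpow_meas (r : ℝ) : Measurable fun τ : ℝ => (b - τ) ^ r := by fun_prop
  -- at `τ = b` the integrand `0 ^ (-ε) * g b` is discontinuous in `ε`, so that point is discarded
  have hpos : ∀ᵐ τ ∂volume, τ ∈ Ι a b → 0 < b - τ := by
    filter_upwards [Measure.ae_ne volume b] with τ hτb hτ
    rw [uIoc_of_le hab] at hτ
    exact sub_pos.mpr (lt_of_le_of_ne hτ.2 hτb)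
  have h_bound : ∀ᵐ τ ∂volume, τ ∈ Ι a b → ∀ x ∈ Metric.ball (0 : ℝ) (1 / 4),
      ‖F' x τ‖ ≤ bound τ := by
    filter_upwards [hpos, hgM] with τ hτpos hτM hτ x hx
    have hy := hτpos hτ
    simp only [F', bound, norm_neg, norm_mul, norm_eq_abs, abs_of_pos (rpow_pos_of_pos hy _)]
    rw [mul_comm M]
    exact mul_le_mul (rpow_neg_mul_abs_log_le hy (by norm_num) (mem_ball_zero_iff.mp hx).le)
      (hτM hτ) (abs_nonneg _) (by positivity)
  have h_bound_int : IntervalIntegrable bound volume a b :=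
    (((intervalIntegrable_sub_rpow (by norm_num)).add
      (intervalIntegrable_sub_rpow (by norm_num))).div_const _).const_mul M
  have h_diff : ∀ᵐ τ ∂volume, τ ∈ Ι a b → ∀ x ∈ Metric.ball (0 : ℝ) (1 / 4),
      HasDerivAt (fun ε => (b - τ) ^ (-ε) * g τ) (F' x τ) x := by
    filter_upwards [hpos] with τ hτpos hτ x _
    exact (((hasDerivAt_neg x).const_rpow (hτpos hτ)).mul_const (g τ)).congr_deriv
      (by simp only [F']; ring)
  obtain ⟨hF'_int, hderiv⟩ := intervalIntegral.hasDerivAt_integral_of_dominated_loc_of_deriv_le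
    (F := fun x τ => (b - τ) ^ (-x) * g τ) (F' := F') (Metric.ball_mem_nhds 0 (by norm_num))
    (.of_forall fun x => (hrpow_meas (-x)).aestronglyMeasurable.mul hg)
    (by simpa using IntervalIntegrable.of_abs_le_const hg hgM)
    (((hrpow_meas _).mul (by fun_prop)).aestronglyMeasurable.mul hg).neg h_bound h_bound_int h_diff
  simp only [F', neg_zero, rpow_zero, one_mul, intervalIntegral.integral_neg] at hF'_int hderiv
  exact ⟨by simpa [Pi.neg_def] using hF'_int.neg, hderiv⟩

/-- For `t > 0` and `f` continuous on `[0,t]`, the function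
`F(ε) = (1/Γ(1−ε)) ∫_0^t (t − τ)^(−ε) f(τ) dτ` is differentiable at `ε = 0` with
`F(0) = ∫_0^t f(τ) dτ` and
`F′(0) = −∫_0^t (ln(t − τ) + γ) f(τ) dτ`, `γ` the Euler–Mascheroni constant. -/
theorem stmt_9 (t : ℝ) (ht : 0 < t) (f : ℝ → ℝ) (hf : ContinuousOn f (Icc 0 t)) :
    (1 / Real.Gamma (1 - (0:ℝ))) * (∫ τ in (0:ℝ)..t, (t - τ) ^ (-(0:ℝ)) * f τ) =
        (∫ τ in (0:ℝ)..t, f τ) ∧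
      HasDerivAt
        (fun ε : ℝ => (1 / Real.Gamma (1 - ε)) * ∫ τ in (0:ℝ)..t, (t - τ) ^ (-ε) * f τ)
        (-∫ τ in (0:ℝ)..t, (Real.log (t - τ) + Real.eulerMascheroniConstant) * f τ) 0 := by
  have hIoc : Ι 0 t ⊆ Icc 0 t := by rw [uIoc_of_le ht.le]; exact Ioc_subset_Icc_self
  obtain ⟨M, hM⟩ := isCompact_Icc.exists_bound_of_continuousOn hf
  obtain ⟨hlog_int, hderiv⟩ := hasDerivAt_intervalIntegral_sub_rpow_neg_mul (M := M) ht.le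
    ((hf.mono hIoc).aestronglyMeasurable measurableSet_uIoc)
    (.of_forall fun τ hτ => hM τ (hIoc hτ))
  have hf_int : IntervalIntegrable f volume 0 t :=
    (hf.mono (uIcc_of_le ht.le).subset).intervalIntegrable
  refine ⟨by simp [Gamma_one], ?_⟩
  refine (hasDerivAt_one_div_Gamma_one_sub.fun_mul hderiv).congr_deriv ?_
  simp only [add_mul, intervalIntegral.integral_add hlog_int (hf_int.const_mul _),
    intervalIntegral.integral_const_mul, sub_zero, Gamma_one, neg_zero, rpow_zero, one_mul]
  ring
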